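/- Let L be a finite-dimensional Lie algebra over any field. All one-dimensional subalgebras of L are weak c-ideals of L if and only if either L³ = 0, or L = A ⊕ B where A is an abelian ideal of L and B is an almost abelian ideal of L. -/

import Mathlib

open LieAlgebra Module

section Defs

variable (F : Type*) [Field F] {L : Type*} [LieRing L] [LieAlgebra F L]

/-- `A` is an ideal of `B`, where `A` and `B` are subalgebras of `L`. -/
def IsIdealOf (A B : LieSubalgebra F L) : Prop :=
  A ≤ B ∧ ∀ x ∈ B, ∀ y ∈ A, ⁅x, y⁆ ∈ A

/-- `C` is a subideal of `L`: there is a chain of subalgebras from `C` to `L`,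
each an ideal in the next. -/
def IsSubideal (C : LieSubalgebra F L) : Prop :=
  ∃ (n : ℕ) (f : ℕ → LieSubalgebra F L),
    f 0 = C ∧ f n = ⊤ ∧ ∀ i < n, IsIdealOf F (f i) (f (i + 1))

/-- The core `B_L` of a subalgebra `B`: the largest ideal of `L` contained in `B`. -/
def lieCore (B : LieSubalgebra F L) : LieIdeal F L :=
  sSup {I : LieIdeal F L | (I : Set L) ⊆ (B : Set L)}

/-- `B` is a weak c-ideal of `L`. -/
def IsWeakCIdeal (B : LieSubalgebra F L) : Prop :=
  ∃ C : LieSubalgebra F L, IsSubideal F C ∧ B ⊔ C = ⊤ ∧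
    ((B ⊓ C : LieSubalgebra F L) : Set L) ⊆ (lieCore F B : Set L)

/-- `B` is a c-ideal of `L`. -/
def IsCIdeal (B : LieSubalgebra F L) : Prop :=
  ∃ C : LieSubalgebra F L, (∀ x : L, ∀ y ∈ C, ⁅x, y⁆ ∈ C) ∧ B ⊔ C = ⊤ ∧
    ((B ⊓ C : LieSubalgebra F L) : Set L) ⊆ (lieCore F B : Set L)

/-- `M` is a maximal subalgebra of `L`. -/
def IsMaxSubalgebra (M : LieSubalgebra F L) : Prop :=
  M ≠ ⊤ ∧ ∀ K : LieSubalgebra F L, M < K → K = ⊤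

/-- `B` is a maximal subalgebra of the subalgebra `C`. -/
def IsMaxSubalgebraIn (B C : LieSubalgebra F L) : Prop :=
  B < C ∧ ∀ K : LieSubalgebra F L, B < K → K ≤ C → K = C

/-- `C` is a maximal nilpotent subalgebra of `L`. -/
def IsMaxNilpotentSubalgebra (C : LieSubalgebra F L) : Prop :=
  LieRing.IsNilpotent C ∧
    ∀ D : LieSubalgebra F L, LieRing.IsNilpotent D → C ≤ D → C = D

/-- The quotient map `L → L ⧸ I` as a morphism of Lie algebras. -/
def quotHom (I : LieIdeal F L) : L →ₗ⁅F⁆ L ⧸ I :=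
  { (LieSubmodule.Quotient.mk' I).toLinearMap with
    map_lie' := fun {_ _} => rfl }

end Defs

/-- A Lie algebra `M` is almost abelian if `M = M² ⊕ Fx` where `M²` is abelian and
`⁅x, y⁆ = y` for all `y ∈ M²`. -/
def IsAlmostAbelian (F : Type*) [Field F] (M : Type*) [LieRing M] [LieAlgebra F M] :
    Prop :=
  ∃ x : M, (∀ y ∈ LieModule.lowerCentralSeries F M M 1, ⁅x, y⁆ = y) ∧
    (∀ y ∈ LieModule.lowerCentralSeries F M M 1, ∀ z ∈ LieModule.lowerCentralSeries F M M 1, ⁅y, z⁆ = 0) ∧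
    IsCompl (LieModule.lowerCentralSeries F M M 1).toSubmodule (Submodule.span F {x})


/-!
One-dimensional subalgebras are weak c-ideals exactly when every element of `L²` spans an ideal.
If `b ∉ L²`, a complement of `Fb` containing `L²` is an ideal. If `b ∈ L²` lies outside the
subideal `C` witnessing the property, the subideal chain from `C` to `L` contains an ideal `D`
of `L` with `D + Fb = L` and `b ∉ D`; but `L / D` is abelian, so `L² ≤ D`.

If every element of `L²` spans an ideal, `L` acts on `L²` by scalars `φ`, a linear form that
vanishes on `L²`. When `L³ ≠ 0`, pick `x` with `φ x = 1`: then `L = Z(L) ⊕ (L² + Fx)` and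
`L² + Fx` is almost abelian. Conversely, if `L = A ⊕ B` then `L² = B²`, on which `L` acts
by scalars.
-/
section

open LieModule Submodule

variable {F : Type*} [Field F] {L : Type*} [LieRing L] [LieAlgebra F L]

namespace LieSubalgebra

variable (F) in
def spanSingleton (b : L) : LieSubalgebra F L where
  toSubmodule := span F {b}
  lie_mem' {u v} hu hv := by
    obtain ⟨c, rfl⟩ := mem_span_singleton.mp hu
    obtain ⟨d, rfl⟩ := mem_span_singleton.mp hv
    simp

lemma finrank_spanSingleton {b : L} (hb : b ≠ 0) : finrank F (spanSingleton F b) = 1 :=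
  finrank_span_singleton hb

lemma exists_eq_spanSingleton_of_finrank_eq_one {B : LieSubalgebra F L}
    (hB : finrank F B = 1) : ∃ b : L, B = spanSingleton F b := by
  obtain ⟨v, -, hv⟩ := finrank_eq_one_iff'.mp hB
  refine ⟨v, le_antisymm (fun w hw ↦ ?_) fun w hw ↦ ?_⟩
  · obtain ⟨c, hc⟩ := hv ⟨w, hw⟩
    exact mem_span_singleton.mpr ⟨c, congrArg Subtype.val hc⟩
  · obtain ⟨c, rfl⟩ := mem_span_singleton.mp hw
    exact B.smul_mem c v.2

end LieSubalgebra

lemma lie_mem_lowerCentralSeries_one {M : Type*} [AddCommGroup M] [Module F M]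
    [LieRingModule L M] [LieModule F L M] (z : L) (m : M) :
    ⁅z, m⁆ ∈ lowerCentralSeries F L M 1 := by
  rw [lowerCentralSeries_succ, lowerCentralSeries_zero]
  exact LieSubmodule.lie_mem_lie (LieSubmodule.mem_top z) (LieSubmodule.mem_top m)

variable (F) in
def lieIdealOfLowerCentralSeriesLE (p : Submodule F L)
    (hp : (lowerCentralSeries F L L 1).toSubmodule ≤ p) : LieIdeal F L where
  toSubmodule := p
  lie_mem := fun _ ↦ hp (lie_mem_lowerCentralSeries_one _ _)

lemma LieIdeal.mem_lowerCentralSeries_one_iff {I : LieIdeal F L} {y : I} :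
    y ∈ lowerCentralSeries F I I 1 ↔ (y : L) ∈ ⁅I, I⁆ := by
  change y ∈ LieAlgebra.derivedSeries F I 1 ↔ _
  rw [LieIdeal.derivedSeries_eq_derivedSeriesOfIdeal_comap]
  rfl

lemma Submodule.isCompl_comap_subtype_of_disjoint_of_sup_eq {R M : Type*} [Ring R]
    [AddCommGroup M] [Module R M] {p q r : Submodule R M} (hd : Disjoint q r) (hs : q ⊔ r = p) :
    IsCompl (q.comap p.subtype) (r.comap p.subtype) := by
  subst hs
  rw [(q ⊔ r).mapIic.isCompl_iff, Set.Iic.isCompl_iff]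
  simpa [map_comap_subtype] using hd

lemma LieIdeal.isSubideal (I : LieIdeal F L) : IsSubideal F (I : LieSubalgebra F L) := by
  refine ⟨1, fun i ↦ if i = 0 then I else ⊤, rfl, rfl, fun i hi ↦ ?_⟩
  obtain rfl : i = 0 := Nat.lt_one_iff.mp hi
  exact ⟨le_top, fun _ _ _ hy ↦ I.lie_mem hy⟩

lemma le_lieCore {B : LieSubalgebra F L} {I : LieIdeal F L} (h : (I : Set L) ⊆ B) :
    I ≤ lieCore F B :=
  le_sSup h

lemma lieCore_subset (B : LieSubalgebra F L) : (lieCore F B : Set L) ⊆ B := by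
  intro v hv
  have : (lieCore F B).toSubmodule ≤ B.toSubmodule := by
    rw [lieCore, LieSubmodule.sSup_toSubmodule]
    exact sSup_le fun _ ⟨_, hI, hp⟩ ↦ hp ▸ hI
  exact this hv

lemma isWeakCIdeal_of_forall_lie_mem {B : LieSubalgebra F L} (h : ∀ z : L, ∀ y ∈ B, ⁅z, y⁆ ∈ B) :
    IsWeakCIdeal F B := by
  let I : LieIdeal F L := { B.toSubmodule with lie_mem := fun {z y} hy ↦ h z y hy }
  refine ⟨⊤, by simpa using (⊤ : LieIdeal F L).isSubideal, sup_top_eq B, fun v hv ↦ ?_⟩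
  exact le_lieCore (I := I) subset_rfl ((LieSubalgebra.mem_inf _ _ _).mp hv).1

lemma isWeakCIdeal_of_isCompl {B : LieSubalgebra F L} (I : LieIdeal F L)
    (h : IsCompl B.toSubmodule I.toSubmodule) : IsWeakCIdeal F B := by
  refine ⟨I, I.isSubideal, eq_top_iff.mpr fun z _ ↦ ?_, fun v hv ↦ ?_⟩
  · obtain ⟨u, hu, w, hw, rfl⟩ := mem_sup.mp (h.codisjoint.eq_top ▸ mem_top : z ∈ _ ⊔ _)
    exact add_mem (le_sup_left (b := (I : LieSubalgebra F L)) hu) (le_sup_right (a := B) hw)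
  · obtain rfl : v = 0 := (mem_bot F).mp (h.disjoint.le_bot ⟨hv.1, hv.2⟩)
    exact zero_mem _

lemma isWeakCIdeal_spanSingleton_of_forall_lie_mem_span {b : L}
    (h : ∀ z : L, ⁅z, b⁆ ∈ span F {b}) : IsWeakCIdeal F (LieSubalgebra.spanSingleton F b) := by
  refine isWeakCIdeal_of_forall_lie_mem fun z y hy ↦ ?_
  obtain ⟨c, rfl⟩ := mem_span_singleton.mp hy
  rw [lie_smul]
  exact smul_mem _ c (h z)

lemma isWeakCIdeal_spanSingleton_of_notMem {b : L} (hb : b ∉ lowerCentralSeries F L L 1) :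
    IsWeakCIdeal F (LieSubalgebra.spanSingleton F b) := by
  obtain ⟨C, hNC, hC⟩ := (disjoint_span_singleton_of_notMem (K := F) hb).exists_isCompl
  exact isWeakCIdeal_of_isCompl (lieIdealOfLowerCentralSeriesLE F C hNC) hC.symm

lemma IsSubideal.exists_lieIdeal_notMem {C : LieSubalgebra F L} (hC : IsSubideal F C) {b : L}
    (hbC : b ∉ C) (hsup : LieSubalgebra.spanSingleton F b ⊔ C = ⊤) :
    ∃ D : LieIdeal F L, C ≤ D ∧ b ∉ D := by
  obtain ⟨n, f, rfl, hfn, hf⟩ := hC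
  have hmono : ∀ i ≤ n, f 0 ≤ f i := by
    intro i
    induction i with
    | zero => exact fun _ ↦ le_rfl
    | succ k ih => exact fun hk ↦ (ih (by omega)).trans (hf k (by omega)).1
  -- `i` is the last step of the chain that still misses `b`.
  obtain ⟨i, hi, hi1⟩ := Nat.exists_not_and_succ_of_not_zero_of_exists
    (p := fun m ↦ n ≤ m ∨ b ∈ f m) (by
      rintro (h | h)
      · exact hbC (Nat.le_zero.mp h ▸ hfn ▸ LieSubalgebra.mem_top b)
      · exact hbC h) ⟨n, Or.inl le_rfl⟩
  rw [not_or, not_le] at hi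
  have hbi : b ∈ f (i + 1) := hi1.elim (fun h ↦ (by omega : i + 1 = n) ▸ hfn ▸ trivial) id
  have htop : f (i + 1) = ⊤ := by
    refine eq_top_iff.mpr (hsup ▸ sup_le (fun u hu ↦ ?_) (hmono (i + 1) hi.1))
    obtain ⟨c, rfl⟩ := mem_span_singleton.mp hu
    exact (f (i + 1)).smul_mem c hbi
  let D : LieIdeal F L :=
    { (f i).toSubmodule with lie_mem := fun {z y} hy ↦ (hf i hi.1).2 z (htop ▸ trivial) y hy }
  exact ⟨D, hmono i hi.1.le, hi.2⟩

lemma lie_mem_of_mem_sup_span_singleton (D : LieIdeal F L) {b u v : L}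
    (hu : u ∈ D.toSubmodule ⊔ span F {b}) (hv : v ∈ D.toSubmodule ⊔ span F {b}) : ⁅u, v⁆ ∈ D := by
  obtain ⟨d, hd, r, hr, rfl⟩ := mem_sup.mp hu
  obtain ⟨d', hd', r', hr', rfl⟩ := mem_sup.mp hv
  obtain ⟨c, rfl⟩ := mem_span_singleton.mp hr
  obtain ⟨c', rfl⟩ := mem_span_singleton.mp hr'
  have hdb : ⁅d, b⁆ ∈ D := by rw [← lie_skew]; exact neg_mem (D.lie_mem hd)
  simp only [lie_add, add_lie, lie_smul, smul_lie, lie_self, smul_zero, add_zero]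
  exact add_mem (add_mem (D.lie_mem hd') (smul_mem _ c (D.lie_mem hd'))) (smul_mem _ c' hdb)

lemma lowerCentralSeries_one_le_of_sup_eq_top (D : LieIdeal F L) {b : L}
    (h : LieSubalgebra.spanSingleton F b ⊔ D = ⊤) : lowerCentralSeries F L L 1 ≤ D := by
  let K : LieSubalgebra F L :=
    { D.toSubmodule ⊔ span F {b} with
      lie_mem' := fun hu hv ↦ le_sup_left (b := span F {b})
        (lie_mem_of_mem_sup_span_singleton D hu hv) }
  have hK : ∀ u : L, u ∈ D.toSubmodule ⊔ span F {b} := by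
    have : ⊤ ≤ K := h ▸ sup_le (fun _ ↦ mem_sup_right) fun _ ↦ mem_sup_left
    exact fun u ↦ this (LieSubalgebra.mem_top u)
  rw [lowerCentralSeries_succ, lowerCentralSeries_zero, LieSubmodule.lie_le_iff]
  exact fun u _ v _ ↦ lie_mem_of_mem_sup_span_singleton D (hK u) (hK v)

lemma lie_mem_span_of_isWeakCIdeal {b : L}
    (hB : IsWeakCIdeal F (LieSubalgebra.spanSingleton F b))
    (hb : b ∈ lowerCentralSeries F L L 1) (z : L) : ⁅z, b⁆ ∈ span F {b} := by
  obtain ⟨C, hC, hsup, hcore⟩ := hB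
  by_cases hbC : b ∈ C
  · have : b ∈ lieCore F _ := hcore ⟨mem_span_singleton_self b, hbC⟩
    exact lieCore_subset _ ((lieCore F _).lie_mem this)
  · obtain ⟨D, hCD, hbD⟩ := hC.exists_lieIdeal_notMem hbC hsup
    exact absurd (lowerCentralSeries_one_le_of_sup_eq_top D
      (eq_top_iff.mpr (hsup ▸ sup_le_sup_left hCD _)) hb) hbD

theorem forall_finrank_eq_one_isWeakCIdeal_iff :
    (∀ B : LieSubalgebra F L, finrank F B = 1 → IsWeakCIdeal F B) ↔
      ∀ b ∈ lowerCentralSeries F L L 1, ∀ z : L, ⁅z, b⁆ ∈ span F {b} := by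
  refine ⟨fun H b hb z ↦ ?_, fun H B hB ↦ ?_⟩
  · rcases eq_or_ne b 0 with rfl | hb0
    · simp
    exact lie_mem_span_of_isWeakCIdeal (H _ (LieSubalgebra.finrank_spanSingleton hb0)) hb z
  · obtain ⟨b, rfl⟩ := LieSubalgebra.exists_eq_spanSingleton_of_finrank_eq_one hB
    by_cases hb : b ∈ lowerCentralSeries F L L 1
    · exact isWeakCIdeal_spanSingleton_of_forall_lie_mem_span (H b hb)
    · exact isWeakCIdeal_spanSingleton_of_notMem hb

lemma exists_linearMap_lie_eq_smul {M : Type*} [AddCommGroup M] [Module F M] [LieRingModule L M]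
    [LieModule F L M] (h : ∀ (z : L) (m : M), ⁅z, m⁆ ∈ span F {m}) :
    ∃ φ : L →ₗ[F] F, ∀ (z : L) (m : M), ⁅z, m⁆ = φ z • m := by
  rcases subsingleton_or_nontrivial M with hM | hM
  · exact ⟨0, fun _ _ ↦ Subsingleton.elim _ _⟩
  have hscalar (z : L) : ∃ a : F, ∀ m : M, ⁅z, m⁆ = a • m := by
    obtain ⟨a, ha⟩ := LinearMap.exists_eq_smul_id_of_forall_notLinearIndependent
      (f := toEnd F L M z) fun m hli ↦ by
        obtain ⟨c, hc⟩ := mem_span_singleton.mp (h z m)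
        have := LinearIndependent.pair_iff.mp hli c (-1) (by simp [hc])
        simp at this
    exact ⟨a, fun m ↦ by simpa using LinearMap.congr_fun ha m⟩
  choose a ha using hscalar
  obtain ⟨m₀, hm₀⟩ := exists_ne (0 : M)
  have hinj := smul_left_injective F hm₀
  refine ⟨{ toFun := a, map_add' := fun y z ↦ hinj ?_, map_smul' := fun c z ↦ hinj ?_ }, ha⟩
  · simp only [add_smul, ← ha, add_lie]
  · simp only [smul_eq_mul, mul_smul, ← ha, smul_lie, RingHom.id_apply]

section Weight

variable {φ : L →ₗ[F] F}

lemma map_eq_zero_of_mem_lowerCentralSeries_one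
    (hφ : ∀ z : L, ∀ n ∈ lowerCentralSeries F L L 1, ⁅z, n⁆ = φ z • n) {n : L}
    (hn : n ∈ lowerCentralSeries F L L 1) : φ n = 0 := by
  rcases eq_or_ne n 0 with rfl | hn0
  · exact map_zero φ
  have := hφ n n hn
  rw [lie_self] at this
  exact (smul_eq_zero.mp this.symm).resolve_right hn0

lemma lie_eq_zero_of_mem_lowerCentralSeries_one
    (hφ : ∀ z : L, ∀ n ∈ lowerCentralSeries F L L 1, ⁅z, n⁆ = φ z • n) {n m : L}
    (hn : n ∈ lowerCentralSeries F L L 1) (hm : m ∈ lowerCentralSeries F L L 1) : ⁅n, m⁆ = 0 := by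
  rw [hφ n m hm, map_eq_zero_of_mem_lowerCentralSeries_one hφ hn, zero_smul]

lemma mem_center_iff_of_map_eq_one
    (hφ : ∀ z : L, ∀ n ∈ lowerCentralSeries F L L 1, ⁅z, n⁆ = φ z • n) {x n₀ : L} (hx : φ x = 1)
    (hn₀ : n₀ ∈ lowerCentralSeries F L L 1) (hn₀0 : n₀ ≠ 0) {a : L} :
    a ∈ LieAlgebra.center F L ↔ φ a = 0 ∧ ⁅x, a⁆ = 0 := by
  rw [mem_maxTrivSubmodule]
  refine ⟨fun ha ↦ ⟨?_, ha x⟩, fun ⟨ha0, hxa⟩ z ↦ ?_⟩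
  · have : φ a • n₀ = 0 := by rw [← hφ a n₀ hn₀, ← lie_skew, ha n₀, neg_zero]
    exact (smul_eq_zero.mp this).resolve_right hn₀0
  · calc ⁅z, a⁆ = φ x • ⁅z, a⁆ := by rw [hx, one_smul]
      _ = ⁅x, ⁅z, a⁆⁆ := (hφ x _ (lie_mem_lowerCentralSeries_one z a)).symm
      _ = -⁅a, ⁅x, z⁆⁆ := by rw [leibniz_lie, hxa, lie_zero, add_zero, ← lie_skew]
      _ = 0 := by rw [hφ a _ (lie_mem_lowerCentralSeries_one x z), ha0, zero_smul, neg_zero]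

variable (F) in
def derivedSupSpan (x : L) : LieIdeal F L :=
  lieIdealOfLowerCentralSeriesLE F ((lowerCentralSeries F L L 1).toSubmodule ⊔ span F {x})
    le_sup_left

lemma mem_derivedSupSpan {x v : L} :
    v ∈ derivedSupSpan F x ↔ v ∈ (lowerCentralSeries F L L 1).toSubmodule ⊔ span F {x} :=
  Iff.rfl

lemma isCompl_center_derivedSupSpan
    (hφ : ∀ z : L, ∀ n ∈ lowerCentralSeries F L L 1, ⁅z, n⁆ = φ z • n) {x n₀ : L} (hx : φ x = 1)
    (hn₀ : n₀ ∈ lowerCentralSeries F L L 1) (hn₀0 : n₀ ≠ 0) :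
    IsCompl (LieAlgebra.center F L) (derivedSupSpan F x) := by
  have hcenter {a : L} := mem_center_iff_of_map_eq_one hφ hx hn₀ hn₀0 (a := a)
  rw [← LieSubmodule.isCompl_toSubmodule]
  constructor
  · rw [disjoint_iff, eq_bot_iff]
    rintro v ⟨hvA, hvB⟩
    obtain ⟨n, hn, w, hw, rfl⟩ := mem_sup.mp (mem_derivedSupSpan.mp hvB)
    obtain ⟨c, rfl⟩ := mem_span_singleton.mp hw
    obtain ⟨hv0, hxv⟩ := hcenter.mp hvA
    obtain rfl : c = 0 := by
      simpa [map_eq_zero_of_mem_lowerCentralSeries_one hφ hn, hx] using hv0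
    rw [zero_smul, add_zero] at hxv ⊢
    rwa [hφ x n hn, hx, one_smul] at hxv
  · rw [codisjoint_iff, eq_top_iff]
    intro z _
    have hcentral : z - φ z • x - ⁅x, z⁆ ∈ LieAlgebra.center F L := by
      refine hcenter.mpr ⟨?_, ?_⟩
      · simp [map_eq_zero_of_mem_lowerCentralSeries_one hφ (lie_mem_lowerCentralSeries_one x z), hx]
      · rw [lie_sub, lie_sub, lie_smul, lie_self, smul_zero, sub_zero,
          hφ x _ (lie_mem_lowerCentralSeries_one x z), hx, one_smul, sub_self]
    have hB : ⁅x, z⁆ + φ z • x ∈ derivedSupSpan F x :=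
      add_mem_sup (lie_mem_lowerCentralSeries_one x z) (smul_mem _ _ (mem_span_singleton_self x))
    have : z = (z - φ z • x - ⁅x, z⁆) + (⁅x, z⁆ + φ z • x) := by abel
    rw [this]
    exact add_mem_sup hcentral hB

lemma lie_derivedSupSpan_self
    (hφ : ∀ z : L, ∀ n ∈ lowerCentralSeries F L L 1, ⁅z, n⁆ = φ z • n) {x : L} (hx : φ x = 1) :
    ⁅derivedSupSpan F x, derivedSupSpan F x⁆ = lowerCentralSeries F L L 1 := by
  refine le_antisymm ?_ fun n hn ↦ ?_
  · rw [lowerCentralSeries_succ, lowerCentralSeries_zero]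
    exact LieSubmodule.mono_lie le_top le_top
  · have : ⁅x, n⁆ = n := by rw [hφ x n hn, hx, one_smul]
    rw [← this]
    exact LieSubmodule.lie_mem_lie (mem_sup_right (mem_span_singleton_self x)) (mem_sup_left hn)

lemma isAlmostAbelian_derivedSupSpan
    (hφ : ∀ z : L, ∀ n ∈ lowerCentralSeries F L L 1, ⁅z, n⁆ = φ z • n) {x : L} (hx : φ x = 1) :
    IsAlmostAbelian F (derivedSupSpan F x) := by
  set B := derivedSupSpan F x
  have hmem {y : B} : y ∈ lowerCentralSeries F B B 1 ↔ (y : L) ∈ lowerCentralSeries F L L 1 := by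
    rw [LieIdeal.mem_lowerCentralSeries_one_iff, lie_derivedSupSpan_self hφ hx]
  have hxB : x ∈ B := mem_sup_right (mem_span_singleton_self x)
  refine ⟨⟨x, hxB⟩, fun y hy ↦ Subtype.ext ?_, fun y hy w hw ↦ Subtype.ext ?_, ?_⟩
  · change ⁅x, (y : L)⁆ = y
    rw [hφ x _ (hmem.mp hy), hx, one_smul]
  · exact lie_eq_zero_of_mem_lowerCentralSeries_one hφ (hmem.mp hy) (hmem.mp hw)
  have hspan : span F {(⟨x, hxB⟩ : B)} = (span F {x}).comap B.toSubmodule.subtype := by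
    ext v
    simp only [mem_span_singleton, SetLike.mk_smul_mk, Subtype.ext_iff, mem_comap]
    rfl
  have hlcs : (lowerCentralSeries F B B 1).toSubmodule =
      (lowerCentralSeries F L L 1).toSubmodule.comap B.toSubmodule.subtype := by
    ext v
    exact hmem
  rw [hspan, hlcs]
  refine isCompl_comap_subtype_of_disjoint_of_sup_eq ?_ rfl
  refine disjoint_span_singleton_of_notMem fun hxN ↦ ?_
  simp [map_eq_zero_of_mem_lowerCentralSeries_one hφ hxN] at hx

lemma exists_isCompl_isLieAbelian_isAlmostAbelian
    (hφ : ∀ z : L, ∀ n ∈ lowerCentralSeries F L L 1, ⁅z, n⁆ = φ z • n)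
    (h : lowerCentralSeries F L L 2 ≠ ⊥) :
    ∃ A B : LieIdeal F L, IsLieAbelian A ∧ IsAlmostAbelian F B ∧ IsCompl A B := by
  obtain ⟨z₀, n₀, hn₀, hzn₀⟩ : ∃ z₀ n₀ : L, n₀ ∈ lowerCentralSeries F L L 1 ∧ ⁅z₀, n₀⁆ ≠ 0 := by
    contrapose! h
    rw [lowerCentralSeries_succ, LieSubmodule.lie_eq_bot_iff]
    exact fun z _ n hn ↦ h z n hn
  have hφz₀ : φ z₀ ≠ 0 := fun h0 ↦ hzn₀ (by rw [hφ z₀ n₀ hn₀, h0, zero_smul])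
  have hn₀0 : n₀ ≠ 0 := fun h0 ↦ hzn₀ (by rw [h0, lie_zero])
  have hx : φ ((φ z₀)⁻¹ • z₀) = 1 := by simp [hφz₀]
  exact ⟨_, _, inferInstance, isAlmostAbelian_derivedSupSpan hφ hx,
    isCompl_center_derivedSupSpan hφ hx hn₀ hn₀0⟩

end Weight

lemma IsAlmostAbelian.lie_mem_span {M : Type*} [LieRing M] [LieAlgebra F M]
    (h : IsAlmostAbelian F M) {y : M} (hy : y ∈ lowerCentralSeries F M M 1) (v : M) :
    ⁅v, y⁆ ∈ span F {y} := by
  obtain ⟨x, hx, hab, hc⟩ := h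
  obtain ⟨u, hu, w, hw, rfl⟩ := mem_sup.mp (hc.codisjoint.eq_top ▸ mem_top : v ∈ _ ⊔ _)
  obtain ⟨c, rfl⟩ := mem_span_singleton.mp hw
  rw [add_lie, smul_lie, hab u hu y hy, hx y hy, zero_add]
  exact smul_mem _ c (mem_span_singleton_self y)

lemma lowerCentralSeries_one_eq_lie_of_isCompl {A B : LieIdeal F L} (hA : IsLieAbelian A)
    (hAB : IsCompl A B) : lowerCentralSeries F L L 1 = ⁅B, B⁆ := by
  have hAB' : ⁅A, B⁆ = ⊥ := eq_bot_iff.mpr (hAB.inf_eq_bot ▸ LieSubmodule.lie_le_inf A B)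
  rw [lowerCentralSeries_succ, lowerCentralSeries_zero, ← hAB.sup_eq_top, LieSubmodule.lie_sup,
    LieSubmodule.sup_lie, LieSubmodule.sup_lie, LieSubmodule.lie_comm B A, hAB',
    (LieSubmodule.lie_abelian_iff_lie_self_eq_bot A).mp hA]
  simp

lemma lie_mem_span_of_isCompl {A B : LieIdeal F L} (hA : IsLieAbelian A)
    (hB : IsAlmostAbelian F B) (hAB : IsCompl A B) {b : L}
    (hb : b ∈ lowerCentralSeries F L L 1) (z : L) : ⁅z, b⁆ ∈ span F {b} := by
  rw [lowerCentralSeries_one_eq_lie_of_isCompl hA hAB] at hb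
  have hbB : b ∈ B := LieSubmodule.lie_le_right B B hb
  have hy : (⟨b, hbB⟩ : B) ∈ lowerCentralSeries F B B 1 :=
    LieIdeal.mem_lowerCentralSeries_one_iff.mpr hb
  obtain ⟨a, ha, v, hv, rfl⟩ := (LieSubmodule.mem_sup _ _ z).mp
    (by rw [hAB.sup_eq_top]; exact LieSubmodule.mem_top z)
  have hab : ⁅a, b⁆ = 0 := by
    have : ⁅a, b⁆ ∈ A ⊓ B := LieSubmodule.lie_le_inf A B (LieSubmodule.lie_mem_lie ha hbB)
    rwa [hAB.inf_eq_bot, LieSubmodule.mem_bot] at this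
  obtain ⟨c, hc⟩ := mem_span_singleton.mp (hB.lie_mem_span hy ⟨v, hv⟩)
  rw [add_lie, hab, zero_add]
  exact mem_span_singleton.mpr ⟨c, congrArg Subtype.val hc⟩

theorem forall_lie_mem_span_iff :
    (∀ b ∈ lowerCentralSeries F L L 1, ∀ z : L, ⁅z, b⁆ ∈ span F {b}) ↔
      lowerCentralSeries F L L 2 = ⊥ ∨
        ∃ A B : LieIdeal F L, IsLieAbelian A ∧ IsAlmostAbelian F B ∧ IsCompl A B := by
  refine ⟨fun H ↦ or_iff_not_imp_left.mpr fun h ↦ ?_, ?_⟩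
  · obtain ⟨φ, hφ⟩ := exists_linearMap_lie_eq_smul (M := lowerCentralSeries F L L 1)
      fun z n ↦ by
        obtain ⟨c, hc⟩ := mem_span_singleton.mp (H n n.2 z)
        exact mem_span_singleton.mpr ⟨c, Subtype.ext hc⟩
    exact exists_isCompl_isLieAbelian_isAlmostAbelian
      (fun z n hn ↦ congrArg Subtype.val (hφ z ⟨n, hn⟩)) h
  · rintro (h | ⟨A, B, hA, hB, hAB⟩) b hb z
    · have : ⁅z, b⁆ ∈ lowerCentralSeries F L L 2 := by
        rw [lowerCentralSeries_succ]
        exact LieSubmodule.lie_mem_lie (LieSubmodule.mem_top z) hb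
      rw [h, LieSubmodule.mem_bot] at this
      simp [this]
    · exact lie_mem_span_of_isCompl hA hB hAB hb z

end

theorem all_one_dim_weakCIdeal_iff_general {F : Type*} [Field F] {L : Type*} [LieRing L] [LieAlgebra F L] :
    (∀ B : LieSubalgebra F L, Module.finrank F B = 1 → IsWeakCIdeal F B) ↔
      LieModule.lowerCentralSeries F L L 2 = ⊥ ∨
        ∃ A B : LieIdeal F L, IsLieAbelian A ∧ IsAlmostAbelian F B ∧
          IsCompl A B :=
  forall_finrank_eq_one_isWeakCIdeal_iff.trans forall_lie_mem_span_iff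

theorem all_one_dim_weakCIdeal_iff {F : Type*} [Field F] {L : Type*} [LieRing L] [LieAlgebra F L]
    [FiniteDimensional F L] :
    (∀ B : LieSubalgebra F L, Module.finrank F B = 1 → IsWeakCIdeal F B) ↔
      LieModule.lowerCentralSeries F L L 2 = ⊥ ∨
        ∃ A B : LieIdeal F L, IsLieAbelian A ∧ IsAlmostAbelian F B ∧
          IsCompl A B :=
  all_one_dim_weakCIdeal_iff_general
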